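/- Starvation freedom for the centralised N Diners: under the polled dynamics with the invariants (D acyclic, eaters are sinks, hungry dominate thinkers, safety) and the assumption that every eating session lasts finitely many steps, every hungry vertex eventually eats: if ā[i](j) = h then there exists i' > i with ā[i'](j) = e. -/

import Mathlib

inductive Act : Type
  | t | h | e
deriving DecidableEq, Repr

def switch : Act → Act
  | Act.t => Act.h
  | Act.h => Act.e
  | Act.e => Act.t

def fP (a : Act) (b : Bool) : Act := if b then switch a else a

inductive Cmd : Type
  | pass | force (b : Bool)
deriving DecidableEq

def fS (a : Act) (b : Bool) : Cmd → Act
  | Cmd.pass => fP a b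
  | Cmd.force b' => fP a b'

/-- The updated priority relation `dH D a`: edge `j ↦ k` of `D` is reversed when
`a j = e`, or when `a j = t` and `a k = h`; otherwise kept. -/
def dH {V : Type*} (D : V → V → Prop) (a : V → Act) : V → V → Prop :=
  fun j k =>
    (D j k ∧ ¬ (a j = Act.e ∨ (a j = Act.t ∧ a k = Act.h))) ∨
    (D k j ∧ (a k = Act.e ∨ (a k = Act.t ∧ a j = Act.h)))

/-- `D` is a priority map for `E`: it orients each edge of `E` exactly one way. -/
def IsPriorityMap {V : Type*} (E D : V → V → Prop) : Prop :=
  (∀ j k, D j k → E j k) ∧ (∀ j k, E j k → (D j k ↔ ¬ D k j))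

def topD {V : Type*} (E D : V → V → Prop) (j : V) : Prop := ∀ k, E j k → D j k

def ready {V : Type*} (E D : V → V → Prop) (a : V → Act) (j : V) : Prop :=
  a j = Act.h ∧ topD E D j ∧ ∀ k, E j k → a k ≠ Act.e

open scoped Classical in
noncomputable def gH {V : Type*} (E D : V → V → Prop) (a : V → Act) (j : V) : Cmd :=
  if a j = Act.t ∨ a j = Act.e then Cmd.pass
  else if ready E D a j then Cmd.force true else Cmd.force false

/-- One step of the polled dynamics of the philosophers under the hub controller. -/
noncomputable def nextA {V : Type*} (E D : V → V → Prop) (a : V → Act) (b : V → Bool) :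
    V → Act :=
  fun j => fS (a j) (b j) (gH E D a j)

def safe {V : Type*} (E : V → V → Prop) (a : V → Act) : Prop :=
  ∀ j k, E j k → ¬ (a j = Act.e ∧ a k = Act.e)

def Acyclic {V : Type*} (D : V → V → Prop) : Prop :=
  ∀ j, ¬ Relation.TransGen D j j

/-!
Besides the invariants (the priority relation is an acyclic orientation of the graph, no two
neighbours eat, hungry vertices dominate thinking neighbours), the argument runs as follows. Call a
vertex starving if it is hungry from some time on. A starving vertex never gains dominators, so each
neighbour either dominates it from some time on or eventually never does. If no neighbour dominates
it forever, it is eventually a top vertex; its neighbours then cannot start eating, and since nobody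
eats forever they all eventually stop, so it becomes ready and eats. Otherwise some neighbour
dominates it forever; that neighbour cannot think (a hungry vertex dominates its thinking
neighbours) and cannot eat forever, so it is starving as well. At a time when every starving vertex
is dominated by a starving vertex, the acyclic priority relation would contain a cycle.
-/

open Filter

theorem Filter.Frequently.eventually_of_imp_succ {P : ℕ → Prop} (hfreq : ∃ᶠ i in atTop, P i)
    (hstep : ∀ᶠ i in atTop, P i → P (i + 1)) : ∀ᶠ i in atTop, P i := by
  obtain ⟨i₀, hi₀⟩ := eventually_atTop.1 hstep
  obtain ⟨i₁, hi₁, hP⟩ := frequently_atTop.1 hfreq i₀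
  refine eventually_atTop.2 ⟨i₁, fun i hi => ?_⟩
  induction i, hi using Nat.le_induction with
  | base => exact hP
  | succ i hi ih => exact hi₀ i (hi₁.trans hi) ih

section Acyclic

variable {V : Type*} {D : V → V → Prop}

theorem acyclic_of_lt [Preorder V] (h : ∀ x y, D x y → y < x) : Acyclic D := fun j hj =>
  lt_irrefl j <| Relation.transGen_minimal (r' := (· > ·)) h j j hj

theorem Acyclic.of_lex {β : Type*} [Preorder β] {r : V → V → Prop} (hD : Acyclic D) (f : V → β)
    (h : ∀ x y, r x y → f y < f x ∨ f y = f x ∧ D x y) : Acyclic r := by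
  have key : ∀ x y, Relation.TransGen r x y →
      f y < f x ∨ f y = f x ∧ Relation.TransGen D x y := by
    intro x y hxy
    induction hxy with
    | single hxy => exact (h _ _ hxy).imp_right (And.imp_right .single)
    | tail _ hyz ih =>
      rcases ih with hlt | ⟨heq, hDxy⟩ <;> rcases h _ _ hyz with hlt' | ⟨heq', hDyz⟩
      · exact .inl (hlt'.trans hlt)
      · exact .inl (heq'.trans_lt hlt)
      · exact .inl (hlt'.trans_eq heq)
      · exact .inr ⟨heq'.trans heq, hDxy.tail hDyz⟩
  intro j hj
  rcases key j j hj with hlt | ⟨-, hDj⟩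
  · exact lt_irrefl _ hlt
  · exact hD j hDj

theorem Acyclic.has_min [Finite V] (hD : Acyclic D) {s : Set V} (hs : s.Nonempty) :
    ∃ x ∈ s, ∀ y ∈ s, ¬ D y x := by
  have : Std.Irrefl (Relation.TransGen D) := ⟨hD⟩
  have hwf := Finite.wellFounded_of_trans_of_irrefl (Relation.TransGen D)
  exact (Subrelation.wf (fun h => .single h) hwf).has_min s hs

end Acyclic

section Step

variable {V : Type*} {E D : V → V → Prop} {a : V → Act} {b : V → Bool} {j k x y : V}

theorem nextA_of_ready (h : ready E D a j) : nextA E D a b j = .e := by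
  simp [nextA, gH, h, h.1, fS, fP, switch]

theorem nextA_of_hungry_of_not_ready (hj : a j = .h) (h : ¬ ready E D a j) :
    nextA E D a b j = .h := by
  simp [nextA, gH, hj, h, fS, fP]

theorem nextA_of_eating (hj : a j = .e) : nextA E D a b j = .e ∨ nextA E D a b j = .t := by
  cases hb : b j <;> simp [nextA, gH, hj, hb, fS, fP, switch]

theorem eating_or_ready_of_nextA_eq_eating (h : nextA E D a b j = .e) :
    a j = .e ∨ ready E D a j := by
  rcases hj : a j
  · cases hb : b j <;> simp [nextA, gH, hj, hb, fS, fP, switch] at h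
  · by_cases hr : ready E D a j
    · exact .inr hr
    · simp [nextA_of_hungry_of_not_ready hj hr] at h
  · exact .inl rfl

theorem IsPriorityMap.asymm (hD : IsPriorityMap E D) (h : D j k) : ¬ D k j :=
  (hD.2 j k (hD.1 j k h)).1 h

theorem IsPriorityMap.dom_of_not_dom (hD : IsPriorityMap E D) (hE : E j k) (h : ¬ D k j) :
    D j k :=
  (hD.2 j k hE).2 h

theorem isPriorityMap_dH (hsymm : ∀ j k, E j k → E k j) (hD : IsPriorityMap E D) :
    IsPriorityMap E (dH D a) := by
  refine ⟨fun j k hjk => ?_, fun j k hE => ?_⟩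
  · rcases hjk with ⟨h, -⟩ | ⟨h, -⟩
    · exact hD.1 j k h
    · exact hsymm k j (hD.1 k j h)
  · have := hD.2 j k hE
    unfold dH
    tauto

theorem dH_of_hungry_of_thinking (hD : IsPriorityMap E D) (hE : E j k) (hj : a j = .h)
    (hk : a k = .t) : dH D a j k := by
  by_cases hjk : D j k
  · exact .inl ⟨hjk, by simp [hj]⟩
  · exact .inr ⟨not_not.1 (mt (hD.2 j k hE).2 hjk), .inr ⟨hk, hj⟩⟩

theorem of_dH_of_hungry (hj : a j = .h) (h : dH D a k j) : D k j := by
  rcases h with ⟨h, -⟩ | ⟨-, h⟩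
  · exact h
  · simp [hj] at h

theorem safe_nextA (hsymm : ∀ j k, E j k → E k j) (hD : IsPriorityMap E D) (ha : safe E a) :
    safe E (nextA E D a b) := by
  intro j k hE ⟨hj, hk⟩
  rcases eating_or_ready_of_nextA_eq_eating hj with hj | hj <;>
    rcases eating_or_ready_of_nextA_eq_eating hk with hk | hk
  · exact ha j k hE ⟨hj, hk⟩
  · exact hk.2.2 j (hsymm j k hE) hj
  · exact hj.2.2 k hE hk
  · exact hD.asymm (hj.2.1 k hE) (hk.2.1 j (hsymm j k hE))

/-- The updated priority relation points from hungry to thinking to eating vertices, apart from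
the edges of `D` it keeps between vertices in the same state. -/
def Act.level : Act → ℕ
  | .e => 0
  | .t => 1
  | .h => 2

theorem level_lt_or_dom_of_dH (hD : ∀ j k, D j k → E j k) (ha : safe E a) (h : dH D a x y) :
    (a y).level < (a x).level ∨ (a y).level = (a x).level ∧ D x y := by
  rcases h with ⟨hxy, hkeep⟩ | ⟨hyx, hy | ⟨hy, hx⟩⟩
  · rcases hx : a x <;> rcases hy : a y <;> simp_all [Act.level]
  · have hx : a x ≠ .e := fun hx => ha y x (hD y x hyx) ⟨hy, hx⟩
    rcases hx' : a x <;> simp_all [Act.level]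
  · simp [hx, hy, Act.level]

end Step

section Invariant

variable {V : Type*} {E D : V → V → Prop} {a : V → Act}

structure Invariant (E D : V → V → Prop) (a : V → Act) : Prop where
  priorityMap : IsPriorityMap E D
  acyclic : Acyclic D
  safety : safe E a
  hungry_dom_thinking : ∀ j k, E j k → a j = .h → a k = .t → D j k

theorem Invariant.init [LinearOrder V] (hirr : ∀ j, ¬ E j j) (hsymm : ∀ j k, E j k → E k j)
    (hD : ∀ j k, D j k ↔ E j k ∧ k < j) (ha : ∀ j, a j = .t) : Invariant E D a where
  priorityMap := by
    refine ⟨fun j k h => ((hD j k).1 h).1, fun j k hE => ?_⟩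
    have hne : k ≠ j := by rintro rfl; exact hirr k hE
    simp only [hD, hE, hsymm j k hE, true_and, not_lt]
    exact (hne.le_iff_lt).symm
  acyclic := acyclic_of_lt fun j k h => ((hD j k).1 h).2
  safety := fun j _ _ h => by simp [ha j] at h
  hungry_dom_thinking := fun j _ _ h => by simp [ha j] at h

theorem Invariant.step (hsymm : ∀ j k, E j k → E k j) (b : V → Bool) (hI : Invariant E D a) :
    Invariant E (dH D (nextA E D a b)) (nextA E D a b) where
  priorityMap := isPriorityMap_dH hsymm hI.priorityMap
  acyclic := hI.acyclic.of_lex (fun x => (nextA E D a b x).level) fun _ _ h =>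
    level_lt_or_dom_of_dH hI.priorityMap.1 (safe_nextA hsymm hI.priorityMap hI.safety) h
  safety := safe_nextA hsymm hI.priorityMap hI.safety
  hungry_dom_thinking := fun _ _ hE hj hk => dH_of_hungry_of_thinking hI.priorityMap hE hj hk

end Invariant

structure IsRun {V : Type*} (E : V → V → Prop) (A : ℕ → V → Act) (Ds : ℕ → V → V → Prop)
    (b : ℕ → V → Bool) : Prop where
  symm : ∀ j k, E j k → E k j
  init : Invariant E (Ds 0) (A 0)
  step_act : ∀ i, A (i + 1) = nextA E (Ds i) (A i) (b i)
  step_dom : ∀ i, Ds (i + 1) = dH (Ds i) (A (i + 1))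

namespace IsRun

variable {V : Type*} {E : V → V → Prop} {A : ℕ → V → Act} {Ds : ℕ → V → V → Prop}
  {b : ℕ → V → Bool} {i : ℕ} {j k : V}

theorem invariant (hr : IsRun E A Ds b) : ∀ i, Invariant E (Ds i) (A i)
  | 0 => hr.init
  | i + 1 => by
    rw [hr.step_dom, hr.step_act]
    exact (hr.invariant i).step hr.symm (b i)

theorem hungry_of_forall_not_eating (hr : IsRun E A Ds b) (hj : A i j = .h)
    (hne : ∀ i' > i, A i' j ≠ .e) : ∀ i' ≥ i, A i' j = .h := by
  intro i' hi'
  induction i', hi' using Nat.le_induction with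
  | base => exact hj
  | succ i' hi' ih =>
    rw [hr.step_act]
    by_cases hready : ready E (Ds i') (A i') j
    · exact absurd (hr.step_act i' ▸ nextA_of_ready hready) (hne _ (by omega))
    · exact nextA_of_hungry_of_not_ready ih hready

variable (hfin : ∀ m, ¬ ∀ᶠ i in atTop, A i m = .e)
include hfin

/-- A vertex dominated forever cannot become ready, so once it stops eating it never eats again. -/
theorem eventually_not_eating_of_dominated (hr : IsRun E A Ds b)
    (h : ∀ᶠ i in atTop, Ds i j k) : ∀ᶠ i in atTop, A i k ≠ .e := by
  refine (not_eventually.1 (hfin k)).eventually_of_imp_succ (h.mono fun i hjk hk hk' => ?_)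
  have hD := (hr.invariant i).priorityMap
  rw [hr.step_act] at hk'
  rcases eating_or_ready_of_nextA_eq_eating hk' with hk' | hready
  · exact hk hk'
  · exact hD.asymm hjk (hready.2.1 j (hr.symm _ _ (hD.1 _ _ hjk)))

theorem eventually_hungry_of_dominates (hr : IsRun E A Ds b) (hj : ∀ᶠ i in atTop, A i j = .h)
    (hkj : ∀ᶠ i in atTop, Ds i k j) : ∀ᶠ i in atTop, A i k = .h := by
  have hnt : ∀ᶠ i in atTop, A i k ≠ .t := (hj.and hkj).mono fun i ⟨hji, hkji⟩ hki =>
    have hI := hr.invariant i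
    hI.priorityMap.asymm hkji
      (hI.hungry_dom_thinking j k (hr.symm _ _ (hI.priorityMap.1 _ _ hkji)) hji hki)
  have hne : ∀ᶠ i in atTop, A i k ≠ .e := by
    refine not_frequently.1 fun hfreq => hfin k (hfreq.eventually_of_imp_succ ?_)
    refine ((tendsto_add_atTop_nat 1).eventually hnt).mono fun i hnt' hk => ?_
    rw [hr.step_act] at hnt' ⊢
    exact (nextA_of_eating hk).resolve_right hnt'
  exact (hnt.and hne).mono fun i ⟨hnt, hne⟩ => by cases h : A i k <;> simp_all

theorem not_starving_of_eventually_top [Finite V] (hr : IsRun E A Ds b)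
    (hj : ∀ᶠ i in atTop, A i j = .h) (htop : ∀ᶠ i in atTop, ∀ k, ¬ Ds i k j) : False := by
  have htopD : ∀ᶠ i in atTop, topD E (Ds i) j := htop.mono fun i h k hE =>
    (hr.invariant i).priorityMap.dom_of_not_dom hE (h k)
  have hfree : ∀ᶠ i in atTop, ∀ k, E j k → A i k ≠ .e :=
    eventually_all.2 fun k => eventually_imp_distrib_left.2 fun hE =>
      hr.eventually_not_eating_of_dominated hfin (htopD.mono fun i h => h k hE)
  obtain ⟨i, ⟨⟨hji, hji'⟩, htopi⟩, hfreei⟩ :=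
    (((hj.and ((tendsto_add_atTop_nat 1).eventually hj)).and htopD).and hfree).exists
  have heat : A (i + 1) j = .e := hr.step_act i ▸ nextA_of_ready ⟨hji, htopi, hfreei⟩
  simp [hji'] at heat

theorem exists_starving_dominator [Finite V] (hr : IsRun E A Ds b)
    (hj : ∀ᶠ i in atTop, A i j = .h) :
    ∃ k, (∀ᶠ i in atTop, A i k = .h) ∧ ∀ᶠ i in atTop, Ds i k j := by
  by_cases hdom : ∃ k, ∀ᶠ i in atTop, Ds i k j
  · obtain ⟨k, hk⟩ := hdom
    exact ⟨k, hr.eventually_hungry_of_dominates hfin hj hk, hk⟩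
  · have hlose : ∀ k, ∀ᶠ i in atTop, ¬ Ds i k j → ¬ Ds (i + 1) k j := fun k =>
      ((tendsto_add_atTop_nat 1).eventually hj).mono fun i hj' hk hk' =>
        hk (of_dH_of_hungry hj' (hr.step_dom i ▸ hk'))
    refine (hr.not_starving_of_eventually_top hfin hj (eventually_all.2 fun k => ?_)).elim
    exact (not_eventually.1 (not_exists.1 hdom k)).eventually_of_imp_succ (hlose k)

theorem not_starving [Finite V] (hr : IsRun E A Ds b) (j : V) : ¬ ∀ᶠ i in atTop, A i j = .h := by
  intro hj
  let S := {x | ∀ᶠ i in atTop, A i x = .h}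
  have hdom : ∀ᶠ i in atTop, ∀ x ∈ S, ∃ y ∈ S, Ds i y x :=
    eventually_all.2 fun x => eventually_imp_distrib_left.2 fun hx =>
      let ⟨y, hy, hyx⟩ := hr.exists_starving_dominator hfin hx
      hyx.mono fun _ h => ⟨y, hy, h⟩
  obtain ⟨i, hi⟩ := hdom.exists
  obtain ⟨x, hx, hmin⟩ := (hr.invariant i).acyclic.has_min (s := S) ⟨j, hj⟩
  obtain ⟨y, hy, hyx⟩ := hi x hx
  exact hmin y hy hyx

end IsRun

theorem starvation_freedom {N : ℕ} (E : Fin N → Fin N → Prop)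
    (hE_irr : ∀ j, ¬ E j j) (hE_symm : ∀ j k, E j k → E k j)
    (A : ℕ → Fin N → Act) (Ds : ℕ → Fin N → Fin N → Prop) (b : ℕ → Fin N → Bool)
    (hA0 : ∀ j, A 0 j = Act.t)
    (hD0 : ∀ j k, Ds 0 j k ↔ (E j k ∧ k < j))
    (hAstep : ∀ i, A (i + 1) = nextA E (Ds i) (A i) (b i))
    (hDstep : ∀ i, Ds (i + 1) = dH (Ds i) (A (i + 1)))
    (hfinite_eating : ∀ (j : Fin N) (i : ℕ), A i j = Act.e → ∃ i' > i, A i' j ≠ Act.e) :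
    ∀ (j : Fin N) (i : ℕ), A i j = Act.h → ∃ i' > i, A i' j = Act.e := by
  have hr : IsRun E A Ds b :=
    ⟨hE_symm, .init hE_irr hE_symm hD0 hA0, hAstep, hDstep⟩
  have hfin : ∀ m, ¬ ∀ᶠ i in atTop, A i m = .e := fun m hm => by
    obtain ⟨i, hi⟩ := eventually_atTop.1 hm
    obtain ⟨i', hi', hne⟩ := hfinite_eating m i (hi i le_rfl)
    exact hne (hi i' hi'.le)
  intro j i hj
  by_contra hne
  push Not at hne
  exact hr.not_starving hfin j (eventually_atTop.2 ⟨i, hr.hungry_of_forall_not_eating hj hne⟩)
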